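/- (Model LR with linear costs) For all c1, c2 > 0, the system q1 = S1(q1,q2), q2 = sqrt(q1/c2) - q1 with q1, q2 > 0, where S1(x,y) = (2x + y - c1*(x+y)^2)/2, has exactly one solution, namely q1* = c2/(c1+c2)^2, q2* = c1/(c1+c2)^2; moreover, if 0 < c1/c2 < 7, then |(dS1/dq1)(q1*,q2*) + (dS1/dq2)(q1*,q2*) * R2'(q1*)| < 1 with R2'(q1) = 1/(2*sqrt(c2*q1)) - 1, i.e., the unique positive equilibrium of the one-dimensional system q1(t+1) = S1(q1(t), R2(q1(t))) is locally stable. -/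

import Mathlib

/-- The LMA reaction map with own output `x` and rival output `y`, for a firm
with linear cost coefficient `c`. -/
noncomputable def Slin (c x y : ℝ) : ℝ := (2 * x + y - c * (x + y) ^ 2) / 2

lemma derivS_x (c y x : ℝ) : deriv (fun t => Slin c t y) x = 1 - c * (x + y) := by
  have h : HasDerivAt (fun t : ℝ => Slin c t y) (1 - c * (x + y)) x := by
    have h1 : HasDerivAt (fun t : ℝ => t + y) 1 x := (hasDerivAt_id x).add_const y
    have h2 : HasDerivAt (fun t : ℝ => (t + y) ^ 2) ((2:ℕ) * (x + y) ^ 1 * 1) x := h1.pow 2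
    have h3 := (((hasDerivAt_id x).const_mul 2).add_const y).sub (h2.const_mul c)
    have h4 := h3.div_const 2
    have h5 : (2 * 1 - c * ((2:ℕ) * (x + y) ^ 1 * 1)) / 2 = 1 - c * (x + y) := by
      push_cast; ring
    rw [h5] at h4
    exact h4
  exact h.deriv

lemma derivS_y (c x y : ℝ) : deriv (fun t => Slin c x t) y = (1 - 2 * c * (x + y)) / 2 := by
  have h : HasDerivAt (fun t : ℝ => Slin c x t) ((1 - 2 * c * (x + y)) / 2) y := by
    have h1 : HasDerivAt (fun t : ℝ => x + t) 1 y := (hasDerivAt_id y).const_add x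
    have h2 : HasDerivAt (fun t : ℝ => (x + t) ^ 2) ((2:ℕ) * (x + y) ^ 1 * 1) y := h1.pow 2
    have h3 := ((hasDerivAt_id y).const_add (2 * x)).sub (h2.const_mul c)
    have h4 := h3.div_const 2
    have h5 : (1 - c * ((2:ℕ) * (x + y) ^ 1 * 1)) / 2 = (1 - 2 * c * (x + y)) / 2 := by
      push_cast; ring
    rw [h5] at h4
    exact h4
  exact h.deriv

/-- Model LR with linear costs: the equilibrium system `q1 = S1(q1,q2)`,
`q2 = √(q1/c2) - q1` has exactly one positive solution `q1* = c2/(c1+c2)^2`,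
`q2* = c1/(c1+c2)^2`; and if `0 < c1/c2 < 7` then
`|dS1/dq1 + dS1/dq2 * R2'(q1*)| < 1` at the equilibrium, so the unique
positive equilibrium of the one-dimensional map `q1 ↦ S1(q1, R2(q1))` is
locally stable. -/
theorem modelLR_linear (c1 c2 : ℝ) (hc1 : 0 < c1) (hc2 : 0 < c2) :
    (∀ q1 q2 : ℝ,
      (0 < q1 ∧ 0 < q2 ∧ q1 = Slin c1 q1 q2 ∧
        q2 = Real.sqrt (q1 / c2) - q1) ↔
      (q1 = c2 / (c1 + c2) ^ 2 ∧ q2 = c1 / (c1 + c2) ^ 2)) ∧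
    (0 < c1 / c2 → c1 / c2 < 7 →
      |deriv (fun x => Slin c1 x (c1 / (c1 + c2) ^ 2)) (c2 / (c1 + c2) ^ 2) +
        deriv (fun y => Slin c1 (c2 / (c1 + c2) ^ 2) y) (c1 / (c1 + c2) ^ 2) *
          (1 / (2 * Real.sqrt (c2 * (c2 / (c1 + c2) ^ 2))) - 1)| < 1) := by
  have hs : 0 < c1 + c2 := by linarith
  have hs2 : (0:ℝ) < (c1 + c2) ^ 2 := by positivity
  constructor
  · intro q1 q2
    constructor
    · rintro ⟨h1, h2, h3, h4⟩
      -- From h3: q2 = c1 * (q1 + q2)^2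
      have e1 : q2 = c1 * (q1 + q2) ^ 2 := by
        have := h3
        unfold Slin at this
        field_simp at this
        linarith
      -- From h4: q1 + q2 = sqrt(q1/c2), so (q1+q2)^2 = q1/c2
      have e2 : (q1 + q2) ^ 2 = q1 / c2 := by
        have hq : q1 + q2 = Real.sqrt (q1 / c2) := by linarith
        rw [hq, Real.sq_sqrt (by positivity)]
      have e2' : (q1 + q2) ^ 2 * c2 = q1 := by
        field_simp at e2; linarith
      -- q2 * c2 = c1 * q1
      have e3 : q2 * c2 = c1 * q1 := by
        calc q2 * c2 = c1 * (q1 + q2) ^ 2 * c2 := by rw [← e1]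
        _ = c1 * q1 := by rw [mul_assoc, e2']
      -- q1 * (c1+c2)^2 = c2
      have e4 : q1 * (c1 + c2) ^ 2 = c2 := by
        have h5 : q1 * (c1 + c2) = c2 * (q1 + q2) := by
          have := e3; nlinarith
        have h6 : (q1 * (c1 + c2)) ^ 2 = c2 * q1 := by
          calc (q1 * (c1 + c2)) ^ 2 = (c2 * (q1 + q2)) ^ 2 := by rw [h5]
          _ = c2 * ((q1 + q2) ^ 2 * c2) := by ring
          _ = c2 * q1 := by rw [e2']
        apply mul_left_cancel₀ (ne_of_gt h1)
        linear_combination h6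
      constructor
      · field_simp
        linear_combination e4
      · have : q1 = c2 / (c1 + c2) ^ 2 := by field_simp; linear_combination e4
        have : q2 * c2 = c1 * (c2 / (c1 + c2) ^ 2) := by rw [← this]; exact e3
        field_simp at this ⊢
        nlinarith [this]
    · rintro ⟨h1, h2⟩
      subst h1 h2
      have hsum : c2 / (c1 + c2) ^ 2 + c1 / (c1 + c2) ^ 2 = 1 / (c1 + c2) := by
        field_simp; ring
      refine ⟨by positivity, by positivity, ?_, ?_⟩
      · unfold Slin
        rw [show c2 / (c1 + c2) ^ 2 + c1 / (c1 + c2) ^ 2 = 1 / (c1 + c2) from hsum]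
        field_simp
        ring
      · have hsq : c2 / (c1 + c2) ^ 2 / c2 = (1 / (c1 + c2)) ^ 2 := by
          field_simp
        rw [hsq, Real.sqrt_sq (by positivity)]
        field_simp
        ring
  · intro _ hr7
    have hr : c1 < 7 * c2 := by
      rw [div_lt_iff₀ hc2] at hr7; linarith
    rw [derivS_x, derivS_y]
    have hsum : c2 / (c1 + c2) ^ 2 + c1 / (c1 + c2) ^ 2 = 1 / (c1 + c2) := by
      field_simp; ring
    rw [hsum]
    have hsq : c2 * (c2 / (c1 + c2) ^ 2) = (c2 / (c1 + c2)) ^ 2 := by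
      field_simp
    rw [hsq, Real.sqrt_sq (by positivity)]
    have h1 : 1 / (2 * (c2 / (c1 + c2))) = (c1 + c2) / (2 * c2) := by
      field_simp
    rw [h1]
    rw [abs_lt]
    constructor
    · have key : -1 < (1 - c1 * (1 / (c1 + c2))) +
          (1 - 2 * c1 * (1 / (c1 + c2))) / 2 * ((c1 + c2) / (2 * c2) - 1) ↔
          True := by
        rw [iff_true]
        rw [show (1 - c1 * (1 / (c1 + c2))) +
          (1 - 2 * c1 * (1 / (c1 + c2))) / 2 * ((c1 + c2) / (2 * c2) - 1)
          = (4 * c2 ^ 2 - (c1 - c2) ^ 2) / (4 * c2 * (c1 + c2)) by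
            field_simp; ring]
        rw [lt_div_iff₀ (by positivity)]
        nlinarith
      exact key.mpr trivial
    · rw [show (1 - c1 * (1 / (c1 + c2))) +
        (1 - 2 * c1 * (1 / (c1 + c2))) / 2 * ((c1 + c2) / (2 * c2) - 1)
        = (4 * c2 ^ 2 - (c1 - c2) ^ 2) / (4 * c2 * (c1 + c2)) by
          field_simp; ring]
      rw [div_lt_iff₀ (by positivity)]
      nlinarith [sq_nonneg (c1 + c2)]
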